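/- arXiv:2009.00458 — 2 statements merged into one kernel-verified Lean document; each statement's English description precedes it below -/
import Mathlib

section
/- Let X be a bounded metric space, m a cardinal with 1 < m ≤ #X, and λ, λ' real numbers with λ' > λ ≥ diam X + α_m(X) and λ > 0. Then the simplex λΔ_m lies between X and λ'Δ_m: d_GH(X, λΔ_m) + d_GH(λΔ_m, λ'Δ_m) = d_GH(X, λ'Δ_m), where 2·d_GH(λΔ_m, λ'Δ_m) = λ' − λ > 0; that is, the metric segment [X, λΔ_m] can be extended beyond λΔ_m to λ'Δ_m. -/
/-!
A correspondence between `X` and `λΔ_m` either relates some point to two vertices, which costs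
distortion `λ`, or it is the relation "`x` lies in the part `D v`" for a partition `D` of `X`
indexed by the vertices; its distortion is then the larger of `diam X` and `λ - α(D)`, which is
`λ - α(D)` once `λ ≥ diam X + α_m(X)`. Hence `2 d_GH(X, λΔ_m) = λ - α_m(X)`, and likewise for
`λ'`. A bijection shows `2 d_GH(λΔ_m, λ'Δ_m) ≤ λ' - λ`, and equality holds because any
correspondence between spaces with at least two points relates two pairs of distinct points.
The three distances then add up.
-/

open Metric Set
open scoped ENNReal

/-- A correspondence between `X` and `Y`: a relation whose projections are surjective. -/
def IsCorrespondence {X Y : Type*} (R : Set (X × Y)) : Prop :=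
  (∀ x : X, ∃ y : Y, (x, y) ∈ R) ∧ (∀ y : Y, ∃ x : X, (x, y) ∈ R)

/-- The distortion of a relation `R ⊆ X × Y`. -/
noncomputable def corrDistortion {X Y : Type*} [MetricSpace X] [MetricSpace Y]
    (R : Set (X × Y)) : ℝ≥0∞ :=
  ⨆ p ∈ R, ⨆ q ∈ R, ENNReal.ofReal |dist p.1 q.1 - dist p.2 q.2|

/-- The Gromov–Hausdorff distance between (arbitrary) metric spaces:
half the infimum of distortions of correspondences. -/
noncomputable def ghDist (X Y : Type*) [MetricSpace X] [MetricSpace Y] : ℝ≥0∞ :=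
  (⨅ (R : Set (X × Y)) (_ : IsCorrespondence R), corrDistortion R) / 2

/-- `alphaSup I X` is `α_m(X)` for `m = #I`: the supremum, over all partitions of `X`
into nonempty subsets indexed by `I`, of the infimum of distances between distinct parts. -/
noncomputable def alphaSup (I : Type v) (X : Type u) [MetricSpace X] : ℝ≥0∞ :=
  ⨆ D ∈ {D : I → Set X |
      (∀ i, (D i).Nonempty) ∧ (⋃ i, D i = Set.univ) ∧ Pairwise (Function.onFun Disjoint D)},
    ⨅ (i : I) (j : I) (_ : i ≠ j), ⨅ x ∈ D i, ⨅ y ∈ D j, edist x y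

/-- `S` is isometric to `λΔ_m` with `m = #S`. -/
def IsSimplex (lam : ℝ) (S : Type*) [MetricSpace S] : Prop :=
  ∀ p q : S, p ≠ q → dist p q = lam

section Distortion

variable {X Y : Type*} [MetricSpace X] [MetricSpace Y]

/-- `2 · d_GH(X, Y)`. -/
noncomputable def infDistortion (X Y : Type*) [MetricSpace X] [MetricSpace Y] : ℝ≥0∞ :=
  ⨅ (R : Set (X × Y)) (_ : IsCorrespondence R), corrDistortion R

theorem ghDist_eq_infDistortion_div_two : ghDist X Y = infDistortion X Y / 2 := rfl

theorem le_corrDistortion {R : Set (X × Y)} {p q : X × Y} (hp : p ∈ R) (hq : q ∈ R) :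
    ENNReal.ofReal |dist p.1 q.1 - dist p.2 q.2| ≤ corrDistortion R :=
  le_iSup₂_of_le p hp <| le_iSup₂_of_le (f := fun q (_ : q ∈ R) ↦
    ENNReal.ofReal |dist p.1 q.1 - dist p.2 q.2|) q hq le_rfl

theorem corrDistortion_le {R : Set (X × Y)} {c : ℝ≥0∞}
    (h : ∀ p ∈ R, ∀ q ∈ R, ENNReal.ofReal |dist p.1 q.1 - dist p.2 q.2| ≤ c) :
    corrDistortion R ≤ c :=
  iSup₂_le fun p hp ↦ iSup₂_le fun q hq ↦ h p hp q hq

theorem infDistortion_le {R : Set (X × Y)} (hR : IsCorrespondence R) :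
    infDistortion X Y ≤ corrDistortion R :=
  iInf₂_le R hR

theorem le_infDistortion {c : ℝ≥0∞}
    (h : ∀ R : Set (X × Y), IsCorrespondence R → c ≤ corrDistortion R) :
    c ≤ infDistortion X Y :=
  le_iInf₂ h

omit [MetricSpace X] [MetricSpace Y] in
theorem IsCorrespondence.exists_ne_ne [Nontrivial X] [Nontrivial Y] {R : Set (X × Y)}
    (hR : IsCorrespondence R) : ∃ p ∈ R, ∃ q ∈ R, p.1 ≠ q.1 ∧ p.2 ≠ q.2 := by
  obtain ⟨x₁, x₂, hx⟩ := exists_pair_ne X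
  obtain ⟨y₁, h₁⟩ := hR.1 x₁
  obtain ⟨y₂, h₂⟩ := hR.1 x₂
  by_cases hy : y₁ = y₂
  · subst hy
    obtain ⟨y₃, hy₃⟩ := exists_ne y₁
    obtain ⟨x₃, h₃⟩ := hR.2 y₃
    by_cases hx₃ : x₃ = x₁
    · exact ⟨_, h₃, _, h₂, hx₃ ▸ hx, hy₃⟩
    · exact ⟨_, h₃, _, h₁, hx₃, hy₃⟩
  · exact ⟨_, h₁, _, h₂, hx, hy⟩

end Distortion

section Partition

variable {I J X : Type*}

def IsPartition (D : I → Set X) : Prop :=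
  (∀ i, (D i).Nonempty) ∧ (⋃ i, D i = univ) ∧ Pairwise (Function.onFun Disjoint D)

theorem isPartition_fibers {f : X → I} (hf : Function.Surjective f) :
    IsPartition fun i ↦ f ⁻¹' {i} :=
  ⟨hf, eq_univ_of_forall fun x ↦ mem_iUnion.2 ⟨f x, rfl⟩,
    fun _ _ hij ↦ disjoint_left.2 fun _ hi hj ↦ hij (hi.symm.trans hj)⟩

theorem IsPartition.isCorrespondence {D : I → Set X} (hD : IsPartition D) :
    IsCorrespondence {p : X × I | p.1 ∈ D p.2} :=
  ⟨fun x ↦ mem_iUnion.1 (hD.2.1 ▸ mem_univ x), hD.1⟩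

variable [MetricSpace X]

/-- `α(D)`. -/
noncomputable def partitionSep (D : I → Set X) : ℝ≥0∞ :=
  ⨅ (i : I) (j : I) (_ : i ≠ j), ⨅ x ∈ D i, ⨅ y ∈ D j, edist x y

theorem alphaSup_eq_iSup_partitionSep :
    alphaSup I X = ⨆ (D : I → Set X) (_ : IsPartition D), partitionSep D := rfl

theorem IsPartition.partitionSep_le_alphaSup {D : I → Set X} (hD : IsPartition D) :
    partitionSep D ≤ alphaSup I X :=
  le_iSup₂ (f := fun D (_ : IsPartition D) ↦ partitionSep D) D hD

theorem partitionSep_le_edist {D : I → Set X} {i j : I} {x y : X}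
    (hij : i ≠ j) (hx : x ∈ D i) (hy : y ∈ D j) : partitionSep D ≤ edist x y :=
  (iInf₂_le i j).trans <| (iInf_le _ hij).trans <| (iInf₂_le x hx).trans <| iInf₂_le y hy

theorem alphaSup_le_of_equiv (e : I ≃ J) : alphaSup I X ≤ alphaSup J X := by
  refine iSup₂_le fun D hD ↦ ?_
  have hD' : IsPartition (D ∘ e.symm) :=
    ⟨fun j ↦ hD.1 _, e.symm.surjective.iUnion_comp D ▸ hD.2.1,
      fun _ _ hj ↦ hD.2.2 (e.symm.injective.ne hj)⟩
  refine le_trans ?_ hD'.partitionSep_le_alphaSup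
  exact le_iInf₂ fun j j' ↦ le_iInf fun hj ↦ le_iInf₂ fun x hx ↦ le_iInf₂ fun y hy ↦
    partitionSep_le_edist (e.symm.injective.ne hj) hx hy

theorem alphaSup_congr (e : I ≃ J) : alphaSup I X = alphaSup J X :=
  (alphaSup_le_of_equiv e).antisymm (alphaSup_le_of_equiv e.symm)

end Partition

section Simplex

variable {X S S' : Type*} [MetricSpace X] [MetricSpace S] [MetricSpace S'] {lam lam' : ℝ}

theorem IsSimplex.nonneg [Nontrivial S] (hS : IsSimplex lam S) : 0 ≤ lam :=
  let ⟨p, q, hpq⟩ := exists_pair_ne S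
  hS p q hpq ▸ dist_nonneg

theorem IsSimplex.corrDistortion_partition_le [BoundedSpace X] (hS : IsSimplex lam S)
    {D : S → Set X}
    (hD : ENNReal.ofReal (diam (univ : Set X)) + partitionSep D ≤ ENNReal.ofReal lam) :
    corrDistortion {p : X × S | p.1 ∈ D p.2} ≤ ENNReal.ofReal lam - partitionSep D := by
  have hsep : partitionSep D ≠ ⊤ :=
    ne_top_of_le_ne_top ENNReal.ofReal_ne_top (le_add_self.trans hD)
  refine corrDistortion_le fun p hp q hq ↦ ?_
  have hdiam : dist p.1 q.1 ≤ diam (univ : Set X) :=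
    dist_le_diam_of_mem (Bornology.IsBounded.all _) (mem_univ _) (mem_univ _)
  rcases eq_or_ne p.2 q.2 with h | h
  · rw [h, dist_self, sub_zero, abs_of_nonneg dist_nonneg]
    exact (ENNReal.ofReal_le_ofReal hdiam).trans (ENNReal.le_sub_of_add_le_right hsep hD)
  · have hle : dist p.1 q.1 ≤ lam := hdiam.trans <|
      (ENNReal.ofReal_le_ofReal_iff (hS _ _ h ▸ dist_nonneg)).1 (le_self_add.trans hD)
    rw [hS _ _ h, abs_sub_comm, abs_of_nonneg (sub_nonneg.2 hle),
      ENNReal.ofReal_sub _ dist_nonneg, ← edist_dist]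
    exact tsub_le_tsub_left (partitionSep_le_edist h hp hq) _

theorem IsSimplex.infDistortion_le_sub [BoundedSpace X] (hS : IsSimplex lam S) {f : X → S}
    (hf : Function.Surjective f)
    (hge : ENNReal.ofReal (diam (univ : Set X)) + alphaSup S X ≤ ENNReal.ofReal lam) :
    infDistortion X S ≤ ENNReal.ofReal lam - alphaSup S X := by
  have : Nonempty {D : S → Set X // IsPartition D} := ⟨⟨_, isPartition_fibers hf⟩⟩
  rw [alphaSup_eq_iSup_partitionSep, iSup_subtype', ENNReal.sub_iSup ENNReal.ofReal_ne_top]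
  refine le_iInf fun D ↦ (infDistortion_le D.2.isCorrespondence).trans ?_
  exact hS.corrDistortion_partition_le <|
    (add_le_add_right D.2.partitionSep_le_alphaSup _).trans hge

theorem IsSimplex.sub_le_infDistortion (hS : IsSimplex lam S) :
    ENNReal.ofReal lam - alphaSup S X ≤ infDistortion X S := by
  refine le_infDistortion fun R hR ↦ ?_
  by_cases hmulti : ∃ x s t, s ≠ t ∧ (x, s) ∈ R ∧ (x, t) ∈ R
  · obtain ⟨x, s, t, hst, hs, ht⟩ := hmulti
    have := le_corrDistortion hs ht
    rw [dist_self, hS s t hst, zero_sub, abs_neg] at this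
    exact tsub_le_self.trans ((ENNReal.ofReal_le_ofReal (le_abs_self lam)).trans this)
  push Not at hmulti
  have hD : IsPartition fun s ↦ {x | (x, s) ∈ R} :=
    ⟨hR.2, eq_univ_of_forall fun x ↦ mem_iUnion.2 (hR.1 x),
      fun s t hst ↦ disjoint_left.2 fun x hs ht ↦ hmulti x s t hst hs ht⟩
  rw [tsub_le_iff_right]
  refine le_trans ?_ (add_le_add_right hD.partitionSep_le_alphaSup _)
  simp only [partitionSep, ENNReal.add_iInf, le_iInf_iff]
  intro s t hst x hx y hy
  have hdis := le_corrDistortion (p := (x, s)) (q := (y, t)) hx hy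
  rw [hS s t hst] at hdis
  calc ENNReal.ofReal lam ≤ ENNReal.ofReal (|dist x y - lam| + dist x y) :=
        ENNReal.ofReal_le_ofReal (by linarith [neg_abs_le (dist x y - lam)])
    _ = ENNReal.ofReal |dist x y - lam| + edist x y := by
        rw [ENNReal.ofReal_add (abs_nonneg _) dist_nonneg, edist_dist]
    _ ≤ corrDistortion R + edist x y := add_le_add_left hdis _

theorem IsSimplex.infDistortion_eq [BoundedSpace X] (hS : IsSimplex lam S) {f : X → S}
    (hf : Function.Surjective f)
    (hge : ENNReal.ofReal (diam (univ : Set X)) + alphaSup S X ≤ ENNReal.ofReal lam) :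
    infDistortion X S = ENNReal.ofReal lam - alphaSup S X :=
  (hS.infDistortion_le_sub hf hge).antisymm hS.sub_le_infDistortion

theorem IsSimplex.infDistortion_eq_abs_sub [Nontrivial S] (e : S ≃ S')
    (hS : IsSimplex lam S) (hS' : IsSimplex lam' S') :
    infDistortion S S' = ENNReal.ofReal |lam - lam'| := by
  refine le_antisymm ?_ (le_infDistortion fun R hR ↦ ?_)
  · have hR : IsCorrespondence {p : S × S' | e p.1 = p.2} :=
      ⟨fun s ↦ ⟨e s, rfl⟩, fun t ↦ ⟨e.symm t, e.apply_symm_apply t⟩⟩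
    refine (infDistortion_le hR).trans (corrDistortion_le ?_)
    rintro ⟨s, _⟩ (rfl : e s = _) ⟨t, _⟩ (rfl : e t = _)
    rcases eq_or_ne s t with rfl | h
    · simp
    · rw [hS _ _ h, hS' _ _ (e.injective.ne h)]
  · have : Nontrivial S' := e.symm.nontrivial
    obtain ⟨p, hp, q, hq, h₁, h₂⟩ := hR.exists_ne_ne
    simpa only [hS _ _ h₁, hS' _ _ h₂] using le_corrDistortion hp hq

end Simplex

theorem stmt14_general {X S S' : Type u} [MetricSpace X] [MetricSpace S] [MetricSpace S']
    (hXb : EMetric.diam (Set.univ : Set X) ≠ ⊤)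
    (lam lam' : ℝ) (hlt : lam < lam')
    (hS : ∀ p q : S, p ≠ q → dist p q = lam)
    (hS' : ∀ p q : S', p ≠ q → dist p q = lam')
    (hcard : Cardinal.mk S' = Cardinal.mk S)
    (hS1 : 1 < Cardinal.mk S) (hSX : Cardinal.mk S ≤ Cardinal.mk X)
    (hge : ENNReal.ofReal (Metric.diam (Set.univ : Set X)) + alphaSup S X
        ≤ ENNReal.ofReal lam) :
    ghDist X S + ghDist S S' = ghDist X S' ∧
    ghDist X S' ≠ ⊤ ∧
    2 * ghDist S S' = ENNReal.ofReal (lam' - lam) := by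
  have : BoundedSpace X := Bornology.isBounded_univ.1 (isBounded_iff_ediam_ne_top.2 hXb)
  have : Nontrivial S := Cardinal.one_lt_iff_nontrivial.1 hS1
  obtain ⟨e⟩ : Nonempty (S ≃ S') := Cardinal.eq.1 hcard.symm
  obtain ⟨g⟩ : Nonempty (S ↪ X) := (Cardinal.le_def _ _).1 hSX
  have hf : Function.Surjective (Function.invFun g) := Function.invFun_surjective g.injective
  have hα : alphaSup S X = alphaSup S' X := alphaSup_congr e
  have hXS := IsSimplex.infDistortion_eq hS hf hge
  have hXS' := IsSimplex.infDistortion_eq hS' (e.surjective.comp hf)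
    (hα ▸ hge.trans (ENNReal.ofReal_le_ofReal hlt.le))
  have hSS' := IsSimplex.infDistortion_eq_abs_sub e hS hS'
  rw [abs_sub_comm, abs_of_pos (sub_pos.2 hlt)] at hSS'
  rw [← hα] at hXS'
  simp only [ghDist_eq_infDistortion_div_two, ENNReal.div_add_div_same, hXS, hXS', hSS']
  refine ⟨?_, ENNReal.div_ne_top (ENNReal.sub_ne_top ENNReal.ofReal_ne_top) two_ne_zero,
    ENNReal.mul_div_cancel two_ne_zero ENNReal.ofNat_ne_top⟩
  rw [ENNReal.ofReal_sub _ (IsSimplex.nonneg hS), add_comm]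
  exact congrArg (· / 2) <|
    tsub_add_tsub_cancel (ENNReal.ofReal_le_ofReal hlt.le) (le_add_self.trans hge)

/-- under the hypotheses of STATEMENT 13, for any `λ' > λ` the simplex
`λΔ_m` (the space `S`) lies between `X` and `λ'Δ_m` (the space `S'`, of the same
cardinality `m` with all nonzero distances `λ'`): the metric segment `[X, λΔ_m]`
extends beyond `λΔ_m` to `λ'Δ_m`, with `2·d_GH(λΔ_m, λ'Δ_m) = λ' − λ > 0`. -/
theorem stmt14 {X S S' : Type u} [MetricSpace X] [Nonempty X] [MetricSpace S] [MetricSpace S']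
    (hXb : EMetric.diam (Set.univ : Set X) ≠ ⊤)
    (lam lam' : ℝ) (hlam : 0 < lam) (hlt : lam < lam')
    (hS : ∀ p q : S, p ≠ q → dist p q = lam)
    (hS' : ∀ p q : S', p ≠ q → dist p q = lam')
    (hcard : Cardinal.mk S' = Cardinal.mk S)
    (hS1 : 1 < Cardinal.mk S) (hSX : Cardinal.mk S ≤ Cardinal.mk X)
    (hge : ENNReal.ofReal (Metric.diam (Set.univ : Set X)) + alphaSup S X
        ≤ ENNReal.ofReal lam) :
    ghDist X S + ghDist S S' = ghDist X S' ∧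
    ghDist X S' ≠ ⊤ ∧
    2 * ghDist S S' = ENNReal.ofReal (lam' - lam) :=
  stmt14_general hXb lam lam' hlt hS hS' hcard hS1 hSX hge
end

section
/- Let X₁, X₂, Y₁, Y₂ be bounded metric spaces such that d_GH(Y₁,X₁) + d_GH(X₁,X₂) + d_GH(X₂,Y₂) = d_GH(Y₁,Y₂) (that is, the metric segment [X₁,X₂] is contained in [Y₁,Y₂] with X₁ between Y₁ and X₂ and X₂ between X₁ and Y₂). Then min{ d_GH(Y₁,X₁), d_GH(X₂,Y₂) } ≤ max{ diam X₁, diam X₂ }; consequently, no metric segment with bounded endpoints can be infinitely extended beyond both of its endpoints. -/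
open Metric Set
open scoped ENNReal

/-! Since the endpoints `Y₁, Y₂` are nonempty and bounded, `d_GH(Y₁,Y₂) ≤ max (diam Y₁) (diam Y₂) / 2`;
say the maximum is `diam Y₁`. A correspondence of distortion `r` changes diameters by at most `r`,
so `diam Y₁ ≤ diam X₁ + 2 d_GH(Y₁,X₁)`. Substituting into the segment equation and cancelling the
finite term `d_GH(Y₁,X₁)` leaves `d_GH(X₁,X₂) + d_GH(X₂,Y₂) ≤ diam X₁ / 2`; the other case is
symmetric. -/

section Correspondence

variable {X Y : Type*} {R : Set (X × Y)}

lemma IsCorrespondence.preimage_swap (hR : IsCorrespondence R) :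
    IsCorrespondence (Prod.swap ⁻¹' R) :=
  ⟨hR.2, hR.1⟩

lemma isCorrespondence_univ [Nonempty X] [Nonempty Y] :
    IsCorrespondence (univ : Set (X × Y)) :=
  ⟨fun _ => ⟨Classical.arbitrary Y, trivial⟩, fun _ => ⟨Classical.arbitrary X, trivial⟩⟩

variable [MetricSpace X] [MetricSpace Y]

lemma ofReal_abs_dist_sub_dist_le_corrDistortion {p q : X × Y} (hp : p ∈ R) (hq : q ∈ R) :
    ENNReal.ofReal |dist p.1 q.1 - dist p.2 q.2| ≤ corrDistortion R :=
  le_iSup₂_of_le p hp (le_iSup₂_of_le q hq le_rfl)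

lemma corrDistortion_preimage_swap_le : corrDistortion (Prod.swap ⁻¹' R) ≤ corrDistortion R :=
  iSup₂_le fun p hp => iSup₂_le fun q hq => by
    rw [abs_sub_comm]
    exact ofReal_abs_dist_sub_dist_le_corrDistortion (p := p.swap) (q := q.swap) hp hq

lemma corrDistortion_univ_le :
    corrDistortion (univ : Set (X × Y)) ≤ max (ediam (univ : Set X)) (ediam (univ : Set Y)) :=
  iSup₂_le fun p _ => iSup₂_le fun q _ => by
    have habs : |dist p.1 q.1 - dist p.2 q.2| ≤ max (dist p.1 q.1) (dist p.2 q.2) :=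
      abs_sub_le_iff.2 ⟨(sub_le_self _ dist_nonneg).trans (le_max_left _ _),
        (sub_le_self _ dist_nonneg).trans (le_max_right _ _)⟩
    calc ENNReal.ofReal |dist p.1 q.1 - dist p.2 q.2|
        ≤ max (edist p.1 q.1) (edist p.2 q.2) := by
          simpa only [ENNReal.ofReal_max, ← edist_dist] using ENNReal.ofReal_le_ofReal habs
      _ ≤ _ := max_le_max (edist_le_ediam_of_mem (mem_univ _) (mem_univ _))
          (edist_le_ediam_of_mem (mem_univ _) (mem_univ _))

lemma IsCorrespondence.ediam_le_add_corrDistortion (hR : IsCorrespondence R) :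
    ediam (univ : Set X) ≤ ediam (univ : Set Y) + corrDistortion R := by
  refine ediam_le fun x _ x' _ => ?_
  obtain ⟨y, hy⟩ := hR.1 x
  obtain ⟨y', hy'⟩ := hR.1 x'
  have hdist : dist x x' ≤ dist y y' + |dist x x' - dist y y'| := by
    linarith [le_abs_self (dist x x' - dist y y')]
  calc edist x x' ≤ edist y y' + ENNReal.ofReal |dist x x' - dist y y'| := by
        rw [edist_dist, edist_dist, ← ENNReal.ofReal_add dist_nonneg (abs_nonneg _)]
        exact ENNReal.ofReal_le_ofReal hdist
    _ ≤ ediam (univ : Set Y) + corrDistortion R :=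
        add_le_add (edist_le_ediam_of_mem (mem_univ _) (mem_univ _))
          (ofReal_abs_dist_sub_dist_le_corrDistortion (p := (x, y)) (q := (x', y')) hy hy')

end Correspondence

section GromovHausdorff

variable (X Y : Type*) [MetricSpace X] [MetricSpace Y]

lemma ghDist_swap_le : ghDist Y X ≤ ghDist X Y :=
  ENNReal.div_le_div_right (le_iInf₂ fun _ hR =>
    (iInf₂_le _ hR.preimage_swap).trans corrDistortion_preimage_swap_le) 2

lemma ghDist_comm : ghDist X Y = ghDist Y X :=
  le_antisymm (ghDist_swap_le Y X) (ghDist_swap_le X Y)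

lemma ghDist_le_half_max_ediam [Nonempty X] [Nonempty Y] :
    ghDist X Y ≤ max (ediam (univ : Set X)) (ediam (univ : Set Y)) / 2 :=
  ENNReal.div_le_div_right ((iInf₂_le _ isCorrespondence_univ).trans corrDistortion_univ_le) 2

variable {X Y} in
lemma ghDist_ne_top [Nonempty X] [Nonempty Y]
    (hX : ediam (univ : Set X) ≠ ⊤) (hY : ediam (univ : Set Y) ≠ ⊤) : ghDist X Y ≠ ⊤ :=
  ((ghDist_le_half_max_ediam X Y).trans_lt
    (ENNReal.div_lt_top (max_lt hX.lt_top hY.lt_top).ne two_ne_zero)).ne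

lemma ediam_le_add_two_mul_ghDist :
    ediam (univ : Set X) ≤ ediam (univ : Set Y) + 2 * ghDist X Y := by
  rw [ghDist, ENNReal.mul_div_cancel two_ne_zero ENNReal.ofNat_ne_top]
  simp only [ENNReal.add_iInf]
  exact le_iInf₂ fun _ hR => hR.ediam_le_add_corrDistortion

end GromovHausdorff

lemma ghDist_le_ghDist_add_half_ediam (X : Type*) {Y Z : Type*}
    [MetricSpace X] [MetricSpace Y] [MetricSpace Z] [Nonempty Y] [Nonempty Z]
    (hZY : ediam (univ : Set Z) ≤ ediam (univ : Set Y)) :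
    ghDist Y Z ≤ ghDist Y X + ediam (univ : Set X) / 2 :=
  calc ghDist Y Z ≤ max (ediam (univ : Set Y)) (ediam (univ : Set Z)) / 2 :=
        ghDist_le_half_max_ediam Y Z
    _ = ediam (univ : Set Y) / 2 := by rw [max_eq_left hZY]
    _ ≤ (ediam (univ : Set X) + 2 * ghDist Y X) / 2 := by
        gcongr; exact ediam_le_add_two_mul_ghDist Y X
    _ = ghDist Y X + ediam (univ : Set X) / 2 := by
        rw [ENNReal.add_div, mul_comm,
          ENNReal.mul_div_cancel_right two_ne_zero ENNReal.ofNat_ne_top, add_comm]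

lemma ghDist_le_half_ediam_of_segment {X₁ X₂ Y₁ Y₂ : Type*}
    [MetricSpace X₁] [MetricSpace X₂] [MetricSpace Y₁] [MetricSpace Y₂]
    [Nonempty Y₁] [Nonempty Y₂]
    (hseg : ghDist Y₁ X₁ + ghDist X₁ X₂ + ghDist X₂ Y₂ = ghDist Y₁ Y₂)
    (hY : ghDist Y₁ Y₂ ≠ ⊤) (hY₂₁ : ediam (univ : Set Y₂) ≤ ediam (univ : Set Y₁)) :
    ghDist X₂ Y₂ ≤ ediam (univ : Set X₁) / 2 := by
  have hY₁X₁ : ghDist Y₁ X₁ ≠ ⊤ :=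
    ne_top_of_le_ne_top hY (hseg ▸ le_self_add.trans le_self_add)
  have hsum : ghDist Y₁ X₁ + (ghDist X₁ X₂ + ghDist X₂ Y₂)
      ≤ ghDist Y₁ X₁ + ediam (univ : Set X₁) / 2 := by
    rw [← add_assoc, hseg]
    exact ghDist_le_ghDist_add_half_ediam X₁ hY₂₁
  exact le_add_self.trans ((ENNReal.add_le_add_iff_left hY₁X₁).mp hsum)

theorem stmt19_general {X₁ X₂ Y₁ Y₂ : Type*}
    [MetricSpace X₁] [MetricSpace X₂] [MetricSpace Y₁] [MetricSpace Y₂]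
    [Nonempty Y₁] [Nonempty Y₂]
    (hX₁b : EMetric.diam (Set.univ : Set X₁) ≠ ⊤)
    (hX₂b : EMetric.diam (Set.univ : Set X₂) ≠ ⊤)
    (hY₁b : EMetric.diam (Set.univ : Set Y₁) ≠ ⊤)
    (hY₂b : EMetric.diam (Set.univ : Set Y₂) ≠ ⊤)
    (hseg : ghDist Y₁ X₁ + ghDist X₁ X₂ + ghDist X₂ Y₂ = ghDist Y₁ Y₂) :
    min (ghDist Y₁ X₁) (ghDist X₂ Y₂)
      ≤ ENNReal.ofReal
          (max (Metric.diam (Set.univ : Set X₁)) (Metric.diam (Set.univ : Set X₂))) := by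
  rw [ENNReal.ofReal_max, Metric.diam, Metric.diam, ENNReal.ofReal_toReal (a := ediam _) hX₁b,
    ENNReal.ofReal_toReal (a := ediam _) hX₂b]
  have hY := ghDist_ne_top hY₁b hY₂b
  rcases le_total (ediam (univ : Set Y₂)) (ediam (univ : Set Y₁)) with hY₂₁ | hY₁₂
  · calc min (ghDist Y₁ X₁) (ghDist X₂ Y₂) ≤ ediam (univ : Set X₁) / 2 :=
          min_le_of_right_le (ghDist_le_half_ediam_of_segment hseg hY hY₂₁)
      _ ≤ _ := ENNReal.half_le_self.trans (le_max_left _ _)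
  · have hseg' : ghDist Y₂ X₂ + ghDist X₂ X₁ + ghDist X₁ Y₁ = ghDist Y₂ Y₁ := by
      rw [ghDist_comm Y₂ X₂, ghDist_comm X₂ X₁, ghDist_comm X₁ Y₁, ghDist_comm Y₂ Y₁, ← hseg]
      ac_rfl
    have hY' : ghDist Y₂ Y₁ ≠ ⊤ := ghDist_comm Y₁ Y₂ ▸ hY
    calc min (ghDist Y₁ X₁) (ghDist X₂ Y₂) ≤ ediam (univ : Set X₂) / 2 :=
          min_le_of_left_le (ghDist_comm Y₁ X₁ ▸ ghDist_le_half_ediam_of_segment hseg' hY' hY₁₂)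
      _ ≤ _ := ENNReal.half_le_self.trans (le_max_right _ _)

/-- if the metric segment `[X₁, X₂]` (with bounded endpoints) is contained
in `[Y₁, Y₂]` with `X₁` between `Y₁` and `X₂`, and `X₂` between `X₁` and `Y₂`, then
`min {d_GH(Y₁,X₁), d_GH(X₂,Y₂)} ≤ max {diam X₁, diam X₂}`; hence no metric segment with
bounded endpoints can be infinitely extended beyond both of its endpoints. -/
theorem stmt19 {X₁ X₂ Y₁ Y₂ : Type*}
    [MetricSpace X₁] [MetricSpace X₂] [MetricSpace Y₁] [MetricSpace Y₂]
    [Nonempty X₁] [Nonempty X₂] [Nonempty Y₁] [Nonempty Y₂]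
    (hX₁b : EMetric.diam (Set.univ : Set X₁) ≠ ⊤)
    (hX₂b : EMetric.diam (Set.univ : Set X₂) ≠ ⊤)
    (hY₁b : EMetric.diam (Set.univ : Set Y₁) ≠ ⊤)
    (hY₂b : EMetric.diam (Set.univ : Set Y₂) ≠ ⊤)
    (hseg : ghDist Y₁ X₁ + ghDist X₁ X₂ + ghDist X₂ Y₂ = ghDist Y₁ Y₂) :
    min (ghDist Y₁ X₁) (ghDist X₂ Y₂)
      ≤ ENNReal.ofReal
          (max (Metric.diam (Set.univ : Set X₁)) (Metric.diam (Set.univ : Set X₂))) :=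
  stmt19_general hX₁b hX₂b hY₁b hY₂b hseg
end
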